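/- Negative eigenvalue of the linearized operator (Lemma 1.1(3) and equation (1.13)): The function g(x) = √(α(x))·Q(x)^{1/(2b)+3/2} satisfies Hg = λ₀·g with λ₀ = −k·(1/2 − 1/(2b²)) < 0; that is, −g''(x) + (1/4 − (b(1+2b)/4)·sech²(νx))·g(x) = (b²λ₀/(2k))·g(x) for all x ∈ ℝ. Equivalently, in unweighted form, 𝓛(Q^{1/(2b)+3/2})(x) = λ₀·α(x)·Q(x)^{1/(2b)+3/2} for all x. -/

import Mathlib

open Real MeasureTheory Filter

noncomputable section

/-- `ν = -(b+1)/2`. -/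
def nuP (b : ℝ) : ℝ := -(b + 1) / 2

/-- The lefton momentum profile `Q(x) = (A(1-b)/2) (cosh(νx))^{b/ν}`. -/
def Qp (b A : ℝ) (x : ℝ) : ℝ :=
  A * (1 - b) / 2 * Real.cosh (nuP b * x) ^ (b / nuP b)

/-- The lefton velocity profile `q(x) = A (cosh(νx))^{-1/ν}`. -/
def qp (b A : ℝ) (x : ℝ) : ℝ := A * Real.cosh (nuP b * x) ^ (-1 / nuP b)

/-- `k = (A(1-b)/2)^{1/b+1}`. -/
def kP (b A : ℝ) : ℝ := (A * (1 - b) / 2) ^ (1 / b + 1)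

/-- The weight `α(x) = Q(x)^{-1/b-2}`. -/
def alphaP (b A : ℝ) (x : ℝ) : ℝ := Qp b A x ^ (-1 / b - 2)

/-- `SQ(x) = (2k(1-b)/b) Q^{-1/b} + (2(b-1)/b) Q`. -/
def SQp (b A : ℝ) (x : ℝ) : ℝ :=
  2 * kP b A * (1 - b) / b * Qp b A x ^ (-1 / b) + 2 * (b - 1) / b * Qp b A x

/-- The Pöschl–Teller potential `H̃₀(x) = 1/4 - (b(1+2b)/4) sech²(νx)`. -/
def Htilde0 (b : ℝ) (x : ℝ) : ℝ :=
  1 / 4 - b * (1 + 2 * b) / 4 * (1 / Real.cosh (nuP b * x)) ^ 2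

/-- The Schrödinger operator `(Hg)(x) = (2k/b²)(−g'' + H̃₀ g)`. -/
def Hop (b A : ℝ) (g : ℝ → ℝ) (x : ℝ) : ℝ :=
  2 * kP b A / b ^ 2 * (-(deriv (deriv g) x) + Htilde0 b x * g x)

/-- The linearized operator `(𝓛f)(x) = k(−((2α/b²) f')' − (2(b+1)/b) α f)`. -/
def Lop (b A : ℝ) (f : ℝ → ℝ) (x : ℝ) : ℝ :=
  kP b A * (-(deriv (fun y => 2 * alphaP b A y / b ^ 2 * deriv f y) x)
    - 2 * (b + 1) / b * alphaP b A x * f x)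

/-- The integrand of the conserved functional `F₂`. -/
def F2Integrand (b : ℝ) (f : ℝ → ℝ) (x : ℝ) : ℝ :=
  f x ^ (-1 / b) * ((deriv f x) ^ 2 / (b ^ 2 * f x ^ 2) + 1)

/-- The squared weighted norm `‖f‖²_{H¹_α} = ∫ (f² + f'²) α`. -/
def HalphaSq (b A : ℝ) (f : ℝ → ℝ) : ℝ :=
  ∫ x, (f x ^ 2 + deriv f x ^ 2) * alphaP b A x

/-- The `𝒵`-norm `‖f‖_𝒵 = ‖f‖_{H¹_α} + sup_x |f(x)|/Q(x)`. -/
def ZNorm (b A : ℝ) (f : ℝ → ℝ) : ℝ :=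
  Real.sqrt (HalphaSq b A f) + ⨆ x : ℝ, |f x| / Qp b A x

/-- `m : ℝ → ℝ → ℝ` (time then space) solves the b-family equation in momentum form,
with velocity `u` satisfying `m = u - u_xx` and `m_t + u m_x + b u_x m = 0`. -/
def IsBFamilySolution (b : ℝ) (m u : ℝ → ℝ → ℝ) : Prop :=
  (∀ t x, m t x = u t x - deriv (deriv (u t)) x) ∧
  ∀ t x, deriv (fun s => m s x) t + u t x * deriv (m t) x + b * deriv (u t) x * m t x = 0

/-- `(v, h)` solves the linearization of the b-family equation around the lefton:
`h - h_xx = v` and `v_t = ∂_x(q h_xx + (b-1) q' h_x - (b+1) q h + q'' h)`. -/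
def IsLinearizedSolution (b A : ℝ) (v h : ℝ → ℝ → ℝ) : Prop :=
  (∀ t x, h t x - deriv (deriv (h t)) x = v t x) ∧
  ∀ t x, deriv (fun s => v s x) t =
    deriv (fun y => qp b A y * deriv (deriv (h t)) y
      + (b - 1) * deriv (qp b A) y * deriv (h t) y
      - (b + 1) * qp b A y * h t y + deriv (deriv (qp b A)) y * h t y) x

/-- The quadratic form `(𝓛η, η) = (2k/b²)∫ η'² α − (2k(b+1)/b)∫ η² α`. -/
def quadFormL (b A : ℝ) (η : ℝ → ℝ) : ℝ :=
  2 * kP b A / b ^ 2 * (∫ x, deriv η x ^ 2 * alphaP b A x)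
    - 2 * kP b A * (b + 1) / b * (∫ x, η x ^ 2 * alphaP b A x)

/-- The monotonicity weight `ψ_L(x) = (2/π) arctan(exp(νx/L))` with `L = 3 - b`. -/
def psiL (b : ℝ) (x : ℝ) : ℝ :=
  2 / Real.pi * Real.arctan (Real.exp (nuP b * x / (3 - b)))

/-!
The eigenfunction is `√α · Q^{1/(2b)+3/2} = √Q`, a constant multiple of `cosh(νx)^p` with
`p = b/(2ν)`. For every `p`, `cosh(νx)^p` is an eigenfunction of the Pöschl–Teller operator
`-∂² - ν²p(p-1) sech²(νx)` with eigenvalue `-(νp)²`; for this `p` the potential is exactly the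
`sech²` part of `H̃₀` and `(νp)² = b²/4`, which gives the eigenvalue `(1-b²)/4` of `-∂² + H̃₀`.
For `𝓛`, `α · (Q^{1/(2b)+3/2})'` and `α · Q^{1/(2b)+3/2}` are constant multiples of `sinh(νx)`
and `cosh(νx)`, because the exponents of `cosh` in `α` and in `Q^{1/(2b)+3/2}` add up to `1`.
-/

section CoshRpow

variable (ν p : ℝ)

theorem hasDerivAt_cosh_mul_rpow (x : ℝ) :
    HasDerivAt (fun y => cosh (ν * y) ^ p) (ν * p * cosh (ν * x) ^ (p - 1) * sinh (ν * x)) x := by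
  have hcosh : HasDerivAt (fun y => cosh (ν * y)) (sinh (ν * x) * ν) x := by
    simpa using ((hasDerivAt_id' x).const_mul ν).cosh
  have hpow := (hasDerivAt_rpow_const (p := p) (Or.inl (cosh_pos (ν * x)).ne')).comp x hcosh
  refine hpow.congr_deriv ?_
  ring

theorem deriv_cosh_mul_rpow :
    deriv (fun y => cosh (ν * y) ^ p) = fun x => ν * p * cosh (ν * x) ^ (p - 1) * sinh (ν * x) :=
  funext fun x => (hasDerivAt_cosh_mul_rpow ν p x).deriv

theorem deriv_deriv_cosh_mul_rpow (x : ℝ) :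
    deriv (deriv fun y => cosh (ν * y) ^ p) x
      = ν ^ 2 * (p ^ 2 * cosh (ν * x) ^ p - p * (p - 1) * cosh (ν * x) ^ (p - 2)) := by
  have hsinh : HasDerivAt (fun y => sinh (ν * y)) (cosh (ν * x) * ν) x := by
    simpa using ((hasDerivAt_id' x).const_mul ν).sinh
  have hprod : HasDerivAt (fun y => ν * p * cosh (ν * y) ^ (p - 1) * sinh (ν * y)) _ x :=
    ((hasDerivAt_cosh_mul_rpow ν (p - 1) x).const_mul (ν * p)).mul hsinh
  rw [deriv_cosh_mul_rpow, hprod.deriv, show p - 1 - 1 = p - 2 by ring]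
  have hc := cosh_pos (ν * x)
  have hp2 : cosh (ν * x) ^ (p - 2) * cosh (ν * x) ^ 2 = cosh (ν * x) ^ p := by
    rw [← rpow_natCast, ← rpow_add hc]
    norm_num
  have hp1 : cosh (ν * x) ^ (p - 1) * cosh (ν * x) = cosh (ν * x) ^ p := by
    rw [← rpow_add_one hc.ne']
    norm_num
  linear_combination (ν ^ 2 * p * (p - 1) * cosh (ν * x) ^ (p - 2)) * sinh_sq (ν * x)
    + (ν ^ 2 * p * (p - 1)) * hp2 + (ν ^ 2 * p) * hp1

theorem neg_deriv_deriv_cosh_mul_rpow_sub_sech_sq_mul (x : ℝ) :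
    -deriv (deriv fun y => cosh (ν * y) ^ p) x
        - ν ^ 2 * p * (p - 1) * (1 / cosh (ν * x)) ^ 2 * cosh (ν * x) ^ p
      = -(ν * p) ^ 2 * cosh (ν * x) ^ p := by
  have hc := cosh_pos (ν * x)
  have hsech : (1 / cosh (ν * x)) ^ 2 * cosh (ν * x) ^ p = cosh (ν * x) ^ (p - 2) := by
    rw [rpow_sub hc, rpow_two]; field_simp
  rw [deriv_deriv_cosh_mul_rpow]
  linear_combination (-(ν ^ 2 * p * (p - 1))) * hsech

theorem cosh_mul_rpow_mul_deriv_cosh_mul_rpow {m n : ℝ} (hmn : m + n = 1) (x : ℝ) :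
    cosh (ν * x) ^ m * deriv (fun y => cosh (ν * y) ^ n) x = ν * n * sinh (ν * x) := by
  have hmn' : m + (n - 1) = 0 := by linarith
  have hc : cosh (ν * x) ^ m * cosh (ν * x) ^ (n - 1) = 1 := by
    rw [← rpow_add (cosh_pos _), hmn', rpow_zero]
  rw [deriv_cosh_mul_rpow]
  linear_combination (ν * n * sinh (ν * x)) * hc

end CoshRpow

section Lefton

variable {b A : ℝ}

theorem nuP_ne_zero (hb : b ≠ -1) : nuP b ≠ 0 := by
  rw [nuP]
  intro h
  exact hb (by linarith)

theorem Qp_rpow (hC : 0 ≤ A * (1 - b) / 2) (e x : ℝ) :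
    Qp b A x ^ e = (A * (1 - b) / 2) ^ e * cosh (nuP b * x) ^ (b / nuP b * e) := by
  rw [Qp, mul_rpow hC (rpow_nonneg (cosh_pos _).le _), ← rpow_mul (cosh_pos _).le]

theorem Qp_pos (hC : 0 < A * (1 - b) / 2) (x : ℝ) : 0 < Qp b A x :=
  mul_pos hC (rpow_pos_of_pos (cosh_pos _) _)

theorem sqrt_alphaP_mul_Qp_rpow (hb : b ≠ 0) (hC : 0 < A * (1 - b) / 2) (x : ℝ) :
    √(alphaP b A x) * Qp b A x ^ (1 / (2 * b) + 3 / 2)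
      = √(A * (1 - b) / 2) * cosh (nuP b * x) ^ (b / (2 * nuP b)) := by
  have hQ := Qp_pos hC x
  rw [alphaP, sqrt_eq_rpow, ← rpow_mul hQ.le, ← rpow_add hQ,
    show (-1 / b - 2) * (1 / 2) + (1 / (2 * b) + 3 / 2) = (1 / 2 : ℝ) by field_simp; ring,
    Qp_rpow hC.le, ← sqrt_eq_rpow]
  congr 2
  ring

theorem neg_deriv_deriv_add_Htilde0_mul (hb : b ≠ -1) (c x : ℝ) :
    -deriv (deriv fun y => c * cosh (nuP b * y) ^ (b / (2 * nuP b))) x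
        + Htilde0 b x * (c * cosh (nuP b * x) ^ (b / (2 * nuP b)))
      = (1 - b ^ 2) / 4 * (c * cosh (nuP b * x) ^ (b / (2 * nuP b))) := by
  have hν := nuP_ne_zero hb
  have hPT := neg_deriv_deriv_cosh_mul_rpow_sub_sech_sq_mul (nuP b) (b / (2 * nuP b)) x
  have hsq : (nuP b * (b / (2 * nuP b))) ^ 2 = b ^ 2 / 4 := by field_simp; ring
  have hpot : nuP b ^ 2 * (b / (2 * nuP b)) * (b / (2 * nuP b) - 1) = b * (1 + 2 * b) / 4 := by
    field_simp; rw [nuP]; ring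
  rw [hsq, hpot] at hPT
  simp only [deriv_const_mul_field', Htilde0]
  linear_combination c * hPT

theorem nuP_exponents_add (hb : b ≠ 0) (hb1 : b ≠ -1) :
    b / nuP b * (-1 / b - 2) + b / nuP b * (1 / (2 * b) + 3 / 2) = 1 := by
  have hν := nuP_ne_zero hb1
  field_simp
  rw [nuP]
  ring

theorem alphaP_mul_Qp_rpow (hb : b ≠ 0) (hb1 : b ≠ -1) (hC : 0 ≤ A * (1 - b) / 2) (x : ℝ) :
    alphaP b A x * Qp b A x ^ (1 / (2 * b) + 3 / 2)
      = (A * (1 - b) / 2) ^ (-1 / b - 2) * (A * (1 - b) / 2) ^ (1 / (2 * b) + 3 / 2)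
          * cosh (nuP b * x) := by
  have hcosh : cosh (nuP b * x) ^ (b / nuP b * (-1 / b - 2))
      * cosh (nuP b * x) ^ (b / nuP b * (1 / (2 * b) + 3 / 2)) = cosh (nuP b * x) := by
    rw [← rpow_add (cosh_pos _), nuP_exponents_add hb hb1, rpow_one]
  rw [alphaP, Qp_rpow hC, Qp_rpow hC]
  linear_combination (A * (1 - b) / 2) ^ (-1 / b - 2) * (A * (1 - b) / 2) ^ (1 / (2 * b) + 3 / 2)
    * hcosh

theorem alphaP_mul_deriv_Qp_rpow (hb : b ≠ 0) (hb1 : b ≠ -1) (hC : 0 ≤ A * (1 - b) / 2)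
    (x : ℝ) :
    alphaP b A x * deriv (fun y => Qp b A y ^ (1 / (2 * b) + 3 / 2)) x
      = (A * (1 - b) / 2) ^ (-1 / b - 2) * (A * (1 - b) / 2) ^ (1 / (2 * b) + 3 / 2)
          * (b * (1 / (2 * b) + 3 / 2)) * sinh (nuP b * x) := by
  have hν := nuP_ne_zero hb1
  have hcosh := cosh_mul_rpow_mul_deriv_cosh_mul_rpow (nuP b) (nuP_exponents_add hb hb1) x
  rw [← mul_assoc, mul_div_cancel₀ _ hν] at hcosh
  simp only [Qp_rpow hC, deriv_const_mul_field', alphaP]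
  linear_combination (A * (1 - b) / 2) ^ (-1 / b - 2) * (A * (1 - b) / 2) ^ (1 / (2 * b) + 3 / 2)
    * hcosh

theorem Lop_Qp_rpow (hb : b ≠ 0) (hb1 : b ≠ -1) (hC : 0 ≤ A * (1 - b) / 2) (x : ℝ) :
    Lop b A (fun y => Qp b A y ^ (1 / (2 * b) + 3 / 2)) x
      = -kP b A * (1 / 2 - 1 / (2 * b ^ 2)) * alphaP b A x * Qp b A x ^ (1 / (2 * b) + 3 / 2) := by
  set K := (A * (1 - b) / 2) ^ (-1 / b - 2) * (A * (1 - b) / 2) ^ (1 / (2 * b) + 3 / 2)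
  set s : ℝ := 1 / (2 * b) + 3 / 2
  have hflux : (fun y => 2 * alphaP b A y / b ^ 2 * deriv (fun z => Qp b A z ^ s) y)
      = fun y => 2 / b ^ 2 * (K * (b * s)) * sinh (nuP b * y) := by
    funext y
    linear_combination 2 / b ^ 2 * alphaP_mul_deriv_Qp_rpow hb hb1 hC y
  have hsinh : HasDerivAt (fun y => 2 / b ^ 2 * (K * (b * s)) * sinh (nuP b * y))
      (2 / b ^ 2 * (K * (b * s)) * (cosh (nuP b * x) * nuP b)) x := by
    simpa using (((hasDerivAt_id' x).const_mul (nuP b)).sinh.const_mul (2 / b ^ 2 * (K * (b * s))))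
  have hscalar : 2 / b ^ 2 * (b * s) * nuP b + 2 * (b + 1) / b = 1 / 2 - 1 / (2 * b ^ 2) := by
    simp only [s, nuP]
    field_simp
    ring
  rw [Lop, hflux, hsinh.deriv]
  linear_combination (kP b A * (1 / 2 - 1 / (2 * b ^ 2) - 2 * (b + 1) / b))
      * alphaP_mul_Qp_rpow hb hb1 hC x
    + (-(kP b A * K * cosh (nuP b * x))) * hscalar

end Lefton

/-- **Negative eigenvalue of the linearized operator** (Lemma 1.1(3), eq. (1.13)):
`g = √α · Q^{1/(2b)+3/2}` satisfies `Hg = λ₀ g` with `λ₀ = −k(1/2 − 1/(2b²)) < 0`;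
equivalently `−g'' + H̃₀ g = (b²λ₀/(2k)) g`, and in unweighted form
`𝓛(Q^{1/(2b)+3/2}) = λ₀ α Q^{1/(2b)+3/2}`. -/
theorem negative_eigenvalue_of_H (b A : ℝ) (hb : b < -1) (hA : 0 < A) :
    (-(kP b A) * (1 / 2 - 1 / (2 * b ^ 2)) < 0) ∧
    (∀ x : ℝ,
      Hop b A (fun y => Real.sqrt (alphaP b A y) * Qp b A y ^ (1 / (2 * b) + 3 / 2)) x
        = -(kP b A) * (1 / 2 - 1 / (2 * b ^ 2))
            * (Real.sqrt (alphaP b A x) * Qp b A x ^ (1 / (2 * b) + 3 / 2))) ∧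
    (∀ x : ℝ,
      -(deriv (deriv (fun y => Real.sqrt (alphaP b A y) * Qp b A y ^ (1 / (2 * b) + 3 / 2))) x)
          + Htilde0 b x * (Real.sqrt (alphaP b A x) * Qp b A x ^ (1 / (2 * b) + 3 / 2))
        = b ^ 2 * (-(kP b A) * (1 / 2 - 1 / (2 * b ^ 2))) / (2 * kP b A)
            * (Real.sqrt (alphaP b A x) * Qp b A x ^ (1 / (2 * b) + 3 / 2))) ∧
    ∀ x : ℝ,
      Lop b A (fun y => Qp b A y ^ (1 / (2 * b) + 3 / 2)) x
        = -(kP b A) * (1 / 2 - 1 / (2 * b ^ 2)) * alphaP b A x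
            * Qp b A x ^ (1 / (2 * b) + 3 / 2) := by
  have hb0 : b ≠ 0 := by linarith
  have hb1 : b ≠ -1 := hb.ne
  have hC : 0 < A * (1 - b) / 2 := by nlinarith
  have hk : 0 < kP b A := rpow_pos_of_pos hC _
  have hgap : 0 < 1 / 2 - 1 / (2 * b ^ 2) := by
    rw [show 1 / 2 - 1 / (2 * b ^ 2) = (b ^ 2 - 1) / (2 * b ^ 2) by field_simp]
    exact div_pos (by nlinarith) (by positivity)
  have hschrodinger : ∀ x : ℝ,
      -(deriv (deriv (fun y => √(alphaP b A y) * Qp b A y ^ (1 / (2 * b) + 3 / 2))) x)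
          + Htilde0 b x * (√(alphaP b A x) * Qp b A x ^ (1 / (2 * b) + 3 / 2))
        = b ^ 2 * (-(kP b A) * (1 / 2 - 1 / (2 * b ^ 2))) / (2 * kP b A)
            * (√(alphaP b A x) * Qp b A x ^ (1 / (2 * b) + 3 / 2)) := by
    intro x
    rw [funext (sqrt_alphaP_mul_Qp_rpow hb0 hC), sqrt_alphaP_mul_Qp_rpow hb0 hC,
      show b ^ 2 * (-(kP b A) * (1 / 2 - 1 / (2 * b ^ 2))) / (2 * kP b A) = (1 - b ^ 2) / 4 by
        field_simp; ring]
    exact neg_deriv_deriv_add_Htilde0_mul hb1 _ x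
  refine ⟨mul_neg_of_neg_of_pos (neg_neg_of_pos hk) hgap, fun x => ?_, hschrodinger,
    Lop_Qp_rpow hb0 hb1 hC.le⟩
  rw [Hop, hschrodinger x]
  field_simp
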